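/- Let E be an approval election with n voters and candidates c_1, …, c_m that has candidate interval (CI) preferences with respect to this ordering, let k be the committee size, let W be a committee of size k, let ℓ ∈ {1, …, k}, let y be a real number, and let s = ⌈ℓ·n/k⌉. For each index i with 1 ≤ i ≤ m − ℓ + 1, let X(i) be the set of voters who approve every one of the candidates c_i, c_{i+1}, …, c_{i+ℓ−1}. Then E contains an ℓ-cohesive group whose average satisfaction with W is strictly less than y if and only if there exists an index i such that |X(i)| ≥ s and the s voters of X(i) least satisfied with W have average satisfaction with W strictly less than y. -/
import Mathlib


/-- `X` is an `ℓ`-cohesive group in the approval election whose candidates are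
`c_1, …, c_m`, identified with `0, …, m-1 : ℕ`, with approval function `A`,
`n` voters and committee size `k`: `|X| ≥ ℓ·n/k` and at least `ℓ` candidates
are approved by every member of `X`. -/
def IsCohesiveN {V : Type*} (m : ℕ) (A : V → Finset ℕ) (n k ℓ : ℕ) (X : Finset V) : Prop :=
  (ℓ : ℝ) * n / k ≤ X.card ∧
    ℓ ≤ ((Finset.range m).filter (fun c => ∀ v ∈ X, c ∈ A v)).card


/-- The average satisfaction of the group of voters `X` with the committee `W`. -/
noncomputable def avgSat {V : Type*} (A : V → Finset ℕ) (W : Finset ℕ) (X : Finset V) : ℝ :=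
  (∑ v ∈ X, ((A v ∩ W).card : ℝ)) / X.card

lemma exists_subset_avg_le' {V : Type*} [DecidableEq V] (f : V → ℝ) :
    ∀ (n : ℕ) (X : Finset V), X.card = n → ∀ s : ℕ, 1 ≤ s → s ≤ n →
      ∃ Y ⊆ X, Y.card = s ∧ (∑ v ∈ Y, f v) / s ≤ (∑ v ∈ X, f v) / X.card := by
  intro n
  induction n with
  | zero => intro X hX s hs1 hs2; omega
  | succ n ih =>
    intro X hX s hs1 hs2
    rcases eq_or_lt_of_le hs2 with h | h
    · refine ⟨X, Finset.Subset.refl X, by omega, ?_⟩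
      rw [hX, ← h]
    · have hs2' : s ≤ n := by omega
      have hn1 : 1 ≤ n := le_trans hs1 hs2'
      have hne : X.Nonempty := Finset.card_pos.mp (by omega)
      obtain ⟨x, hxX, hxmax⟩ := Finset.exists_max_image X f hne
      have hcard' : (X.erase x).card = n := by
        rw [Finset.card_erase_of_mem hxX, hX]
        omega
      obtain ⟨Y, hY1, hY2, hY3⟩ := ih (X.erase x) hcard' s hs1 hs2'
      refine ⟨Y, hY1.trans (Finset.erase_subset x X), hY2, hY3.trans ?_⟩
      rw [hcard', hX]
      have hsum : ∑ v ∈ X, f v = (∑ v ∈ X.erase x, f v) + f x :=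
        (Finset.sum_erase_add X f hxX).symm
      have hb : ∑ v ∈ X.erase x, f v ≤ (n : ℝ) * f x := by
        calc ∑ v ∈ X.erase x, f v ≤ ∑ _v ∈ X.erase x, f x :=
              Finset.sum_le_sum (fun v hv => hxmax v (Finset.mem_of_mem_erase hv))
          _ = (n : ℝ) * f x := by
              rw [Finset.sum_const, hcard', nsmul_eq_mul]
      have hnpos : (0 : ℝ) < n := by exact_mod_cast hn1
      have hnpos' : (0 : ℝ) < (n : ℝ) + 1 := by linarith
      rw [div_le_div_iff₀ hnpos (by push_cast; linarith)]
      push_cast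
      nlinarith [hb, hsum]

theorem stmt16 {V : Type*} [Fintype V] [DecidableEq V] (m : ℕ) (A : V → Finset ℕ)
    (hrange : ∀ v, A v ⊆ Finset.range m)
    (hCI : ∀ v, ∀ a b c : ℕ, a ≤ b → b ≤ c → a ∈ A v → c ∈ A v → b ∈ A v)
    (k ℓ : ℕ) (hk : 0 < k) (hℓ1 : 1 ≤ ℓ) (hℓk : ℓ ≤ k)
    (W : Finset ℕ) (hWr : W ⊆ Finset.range m) (hW : W.card = k) (y : ℝ)
    (s : ℕ) (hs : s = ⌈(ℓ : ℝ) * Fintype.card V / k⌉₊) :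
    (∃ X : Finset V, IsCohesiveN m A (Fintype.card V) k ℓ X ∧ avgSat A W X < y) ↔
      ∃ i : ℕ, i + ℓ ≤ m ∧
        s ≤ (Finset.univ.filter (fun v => Finset.Ico i (i + ℓ) ⊆ A v)).card ∧
        ∃ Y ⊆ Finset.univ.filter (fun v => Finset.Ico i (i + ℓ) ⊆ A v),
          Y.card = s ∧ avgSat A W Y < y := by
  constructor
  · rintro ⟨X, ⟨hc1, hc2⟩, havg⟩
    rcases Finset.eq_empty_or_nonempty X with hXe | hXne
    · subst hXe
      have hn0 : Fintype.card V = 0 := by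
        by_contra h
        have hn1 : (1 : ℝ) ≤ (Fintype.card V : ℝ) := by
          exact_mod_cast Nat.one_le_iff_ne_zero.mpr h
        have hℓ1' : (1 : ℝ) ≤ (ℓ : ℝ) := by exact_mod_cast hℓ1
        have hk' : (0 : ℝ) < (k : ℝ) := by exact_mod_cast hk
        have hpos : (0 : ℝ) < (ℓ : ℝ) * (Fintype.card V : ℝ) / k :=
          div_pos (by nlinarith) hk'
        simp only [Finset.card_empty, Nat.cast_zero] at hc1
        linarith
      have hs0 : s = 0 := by
        rw [hs, hn0]; simp
      have hm : ℓ ≤ m := by simpa using hc2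
      refine ⟨0, by omega, by omega, ∅, Finset.empty_subset _, by simp [hs0], havg⟩
    · set T := (Finset.range m).filter (fun c => ∀ v ∈ X, c ∈ A v) with hT
      have hc2' : ℓ ≤ T.card := by
        rw [hT]
        convert hc2 using 3
      have hTne : T.Nonempty := Finset.card_pos.mp (by omega)
      set i := T.min' hTne with hi
      set M := T.max' hTne with hM
      have hiT : i ∈ T := T.min'_mem hTne
      have hMT : M ∈ T := T.max'_mem hTne
      have hTsub : T ⊆ Finset.Icc i M := fun c hc =>
        Finset.mem_Icc.mpr ⟨T.min'_le c hc, T.le_max' c hc⟩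
      have hcard : ℓ ≤ M + 1 - i := by
        have h1 := Finset.card_le_card hTsub
        rw [Nat.card_Icc] at h1
        omega
      have hiM : i ≤ M := T.min'_le M hMT
      have hMm : M < m := Finset.mem_range.mp (Finset.mem_filter.mp hMT).1
      have him : i + ℓ ≤ m := by omega
      have hIT : Finset.Ico i (i + ℓ) ⊆ T := by
        intro j hj
        obtain ⟨hj1, hj2⟩ := Finset.mem_Ico.mp hj
        have hjM : j ≤ M := by omega
        rw [Finset.mem_filter] at hiT hMT ⊢
        exact ⟨Finset.mem_range.mpr (by omega),
          fun v hv => hCI v i j M hj1 hjM (hiT.2 v hv) (hMT.2 v hv)⟩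
      have hXsub : X ⊆ Finset.univ.filter (fun v => Finset.Ico i (i + ℓ) ⊆ A v) := by
        intro v hv
        simp only [Finset.mem_filter, Finset.mem_univ, true_and]
        intro c hc
        exact (Finset.mem_filter.mp (hIT hc)).2 v hv
      have hsX : s ≤ X.card := by
        rw [hs]; exact Nat.ceil_le.mpr hc1
      have hs1 : 1 ≤ s := by
        rw [hs]
        refine Nat.one_le_iff_ne_zero.mpr (Nat.ceil_pos.mpr ?_).ne'
        have hn1 : 0 < Fintype.card V := Fintype.card_pos_iff.mpr ⟨hXne.choose⟩
        have hn1' : (1 : ℝ) ≤ (Fintype.card V : ℝ) := by exact_mod_cast hn1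
        have hℓ1' : (1 : ℝ) ≤ (ℓ : ℝ) := by exact_mod_cast hℓ1
        have hk' : (0 : ℝ) < (k : ℝ) := by exact_mod_cast hk
        exact div_pos (by nlinarith) hk'
      obtain ⟨Y, hY1, hY2, hY3⟩ :=
        exists_subset_avg_le' (fun v => ((A v ∩ W).card : ℝ)) X.card X rfl s hs1 hsX
      refine ⟨i, him, le_trans hsX (Finset.card_le_card hXsub), Y, hY1.trans hXsub, hY2, ?_⟩
      have hle : avgSat A W Y ≤ avgSat A W X := by
        unfold avgSat
        rw [hY2]
        exact hY3
      linarith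
  · rintro ⟨i, him, hcard, Y, hYsub, hYcard, hYavg⟩
    refine ⟨Y, ⟨?_, ?_⟩, hYavg⟩
    · rw [hYcard, hs]
      exact Nat.le_ceil _
    · have hsub : Finset.Ico i (i + ℓ) ⊆
          (Finset.range m).filter (fun c => ∀ v ∈ Y, c ∈ A v) := by
        intro c hc
        obtain ⟨h1, h2⟩ := Finset.mem_Ico.mp hc
        refine Finset.mem_filter.mpr ⟨Finset.mem_range.mpr (by omega), fun v hv => ?_⟩
        exact (Finset.mem_filter.mp (hYsub hv)).2 hc
      have hres : ℓ ≤ ((Finset.range m).filter (fun c => ∀ v ∈ Y, c ∈ A v)).card := by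
        have h2 := Finset.card_le_card hsub
        rw [Nat.card_Ico] at h2
        omega
      convert hres using 3
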